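/- (Characterization of transitions through a wall.) Let D = ∏_{i=1}^n (θᵢ⁻, θᵢ⁺) be a box, γᵢ > 0, φ ∈ ℝⁿ a focal point, I⁺ = {i : φᵢ > θᵢ⁺}, I⁻ = {i : φᵢ < θᵢ⁻}, I = I⁺ ∪ I⁻, and τᵢ, τ as defined by the switching/exit time formulas. Fix an index k. (a) If φ_k ≤ θ_k⁺, then for every x ∈ D and every t ≥ 0, the k-th coordinate of the flow Φ_k(x,t) = φ_k + e^{−γ_k t}(x_k − φ_k) is strictly less than θ_k⁺; hence no trajectory starting in D exits through the wall x_k = θ_k⁺. (b) If φ_k > θ_k⁺, then the set of x ∈ D with τ_k(x) < τ_j(x) for all j ∈ I \ {k} is a nonempty open subset of D (hence of positive Lebesgue measure), and every trajectory starting in this set exits D through the wall x_k = θ_k⁺. (The analogous statement holds for the lower wall x_k = θ_k⁻ with the condition φ_k < θ_k⁻.) -/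

import Mathlib

/-!
In each coordinate the flow moves monotonically from `x i` towards the focal value `φ i`, since
`Φᵢ(x,t) - φᵢ = e^{-γᵢt} (xᵢ - φᵢ)`. So it can only reach the wall `θₖ⁺` if `φₖ > θₖ⁺`, and it
reaches a wall `w` between `xᵢ` and `φᵢ` exactly when `e^{-γᵢt} = (φᵢ - w) / (φᵢ - xᵢ)`, i.e. at
`t = τᵢ(x)`. Hence a trajectory leaves the box through wall `k` when `τₖ` is the smallest switching
time. The set of such points is open because the switching times are continuous on the box, and
it is nonempty because `τₖ(x) → 0` as `xₖ` approaches its wall while the other `τⱼ` do not change.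
-/

open MeasureTheory Real Set Filter Topology

namespace PiecewiseAffine

noncomputable def flow (γ φ x t : ℝ) : ℝ := φ + exp (-γ * t) * (x - φ)

noncomputable def switchTime (γ φ w x : ℝ) : ℝ := -(1 / γ) * log ((φ - w) / (φ - x))

/-- The wall that a coordinate in `(a, b)` heads for when `φ ∉ [a, b]`; the paper's switching
time `τᵢ` is `switchTime γᵢ φᵢ (exitWall θᵢ⁻ θᵢ⁺ φᵢ)`. -/
noncomputable def exitWall (a b φ : ℝ) : ℝ := if b < φ then b else a

section Interval

variable {γ φ w x t a b : ℝ}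

lemma flow_lt_of_le (hγ : 0 ≤ γ) (hx : x < b) (hφ : φ ≤ b) (ht : 0 ≤ t) :
    flow γ φ x t < b := by
  have h1 : exp (-γ * t) ≤ 1 := exp_le_one_iff.mpr (by nlinarith)
  have h2 : 0 < exp (-γ * t) := exp_pos _
  unfold flow
  nlinarith

lemma lt_flow_of_le (hγ : 0 ≤ γ) (hx : a < x) (hφ : a ≤ φ) (ht : 0 ≤ t) :
    a < flow γ φ x t := by
  have h1 : exp (-γ * t) ≤ 1 := exp_le_one_iff.mpr (by nlinarith)
  have h2 : 0 < exp (-γ * t) := exp_pos _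
  unfold flow
  nlinarith

/-- The sign of `flow γ φ x t - w` is that of `x - φ` as long as `exp (-γ t)` exceeds the ratio. -/
lemma flow_sub (hx : x ≠ φ) :
    flow γ φ x t - w = (exp (-γ * t) - (φ - w) / (φ - x)) * (x - φ) := by
  have : φ - x ≠ 0 := sub_ne_zero.mpr hx.symm
  unfold flow
  field_simp
  ring

lemma exp_neg_mul_switchTime (hγ : γ ≠ 0) (hr : 0 < (φ - w) / (φ - x)) :
    exp (-γ * switchTime γ φ w x) = (φ - w) / (φ - x) := by
  rw [switchTime, show -γ * (-(1 / γ) * log ((φ - w) / (φ - x))) = log ((φ - w) / (φ - x)) by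
    field_simp, exp_log hr]

lemma lt_exp_of_lt_switchTime (hγ : 0 < γ) (hr : 0 < (φ - w) / (φ - x))
    (ht : t < switchTime γ φ w x) : (φ - w) / (φ - x) < exp (-γ * t) := by
  rw [← exp_neg_mul_switchTime hγ.ne' hr]
  exact exp_lt_exp.mpr (by nlinarith)

lemma switchTime_pos (hγ : 0 < γ) (hr₀ : 0 < (φ - w) / (φ - x))
    (hr₁ : (φ - w) / (φ - x) < 1) :
    0 < switchTime γ φ w x :=
  mul_pos_of_neg_of_neg (by simpa using hγ) (log_neg hr₀ hr₁)

lemma switchTime_self : switchTime γ φ w w = 0 := by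
  simp [switchTime]

lemma continuousAt_switchTime (hw : w ≠ φ) (hx : x ≠ φ) :
    ContinuousAt (switchTime γ φ w) x := by
  have hx' : φ - x ≠ 0 := sub_ne_zero.mpr hx.symm
  refine continuousAt_const.mul (ContinuousAt.log ?_ ?_)
  · exact continuousAt_const.div (continuousAt_const.sub continuousAt_id) hx'
  · exact div_ne_zero (sub_ne_zero.mpr hw.symm) hx'

lemma tendsto_switchTime_self (hw : w ≠ φ) : Tendsto (switchTime γ φ w) (𝓝 w) (𝓝 0) := by
  simpa only [switchTime_self] using (continuousAt_switchTime (γ := γ) hw hw).tendsto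

lemma exitWall_mem_Icc (hab : a ≤ b) : exitWall a b φ ∈ Icc a b := by
  unfold exitWall; split_ifs <;> simp [hab]

lemma ne_of_mem_Ioo_of_lt_or_lt (hx : x ∈ Ioo a b) (hφ : b < φ ∨ φ < a) : x ≠ φ := by
  rintro rfl; rcases hφ with h | h <;> linarith [hx.1, hx.2]

lemma exitWall_ne (hφ : b < φ ∨ φ < a) : exitWall a b φ ≠ φ := by
  unfold exitWall; split_ifs <;> grind

lemma ratio_exitWall_mem_Ioo (hx : x ∈ Ioo a b) (hφ : b < φ ∨ φ < a) :
    (φ - exitWall a b φ) / (φ - x) ∈ Ioo 0 1 := by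
  obtain ⟨hax, hxb⟩ := hx
  unfold exitWall
  split_ifs with h
  · have : 0 < φ - x := by linarith
    exact ⟨div_pos (by linarith) this, (div_lt_one this).mpr (by linarith)⟩
  · have hφa : φ < a := hφ.resolve_left h
    have : φ - x < 0 := by linarith
    exact ⟨div_pos_of_neg_of_neg (by linarith) this,
      (div_lt_one_of_neg this).mpr (by linarith)⟩

lemma flow_switchTime_exitWall (hγ : γ ≠ 0) (hx : x ∈ Ioo a b) (hφ : b < φ ∨ φ < a) :
    flow γ φ x (switchTime γ φ (exitWall a b φ) x) = exitWall a b φ := by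
  have hr := ratio_exitWall_mem_Ioo hx hφ
  rw [← sub_eq_zero, flow_sub (ne_of_mem_Ioo_of_lt_or_lt hx hφ), exp_neg_mul_switchTime hγ hr.1,
    sub_self, zero_mul]

lemma flow_mem_Ioo_of_lt_switchTime (hγ : 0 < γ) (hx : x ∈ Ioo a b) (ht₀ : 0 ≤ t)
    (ht : b < φ ∨ φ < a → t < switchTime γ φ (exitWall a b φ) x) : flow γ φ x t ∈ Ioo a b := by
  by_cases hφ : b < φ ∨ φ < a
  · have hr := ratio_exitWall_mem_Ioo hx hφ
    obtain ⟨c, hc, hsub⟩ : ∃ c > 0, flow γ φ x t - exitWall a b φ = c * (x - φ) :=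
      ⟨_, sub_pos.mpr (lt_exp_of_lt_switchTime hγ hr.1 (ht hφ)),
        flow_sub (ne_of_mem_Ioo_of_lt_or_lt hx hφ)⟩
    rcases hφ with hbφ | hφa
    · rw [exitWall, if_pos hbφ] at hsub
      exact ⟨lt_flow_of_le hγ.le hx.1 (by linarith [hx.1, hx.2]) ht₀, by nlinarith [hx.2]⟩
    · rw [exitWall, if_neg (by linarith [hx.1, hx.2])] at hsub
      exact ⟨by nlinarith [hx.1], flow_lt_of_le hγ.le hx.2 (by linarith [hx.1, hx.2]) ht₀⟩
  · push Not at hφ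
    exact ⟨lt_flow_of_le hγ.le hx.1 hφ.2 ht₀, flow_lt_of_le hγ.le hx.2 hφ.1 ht₀⟩

end Interval

section Box

variable {n : ℕ} (θm θp γ φ : Fin n → ℝ)

def box : Set (Fin n → ℝ) := {y | ∀ i, y i ∈ Ioo (θm i) (θp i)}

noncomputable def exitTime (i : Fin n) (x : Fin n → ℝ) : ℝ :=
  switchTime (γ i) (φ i) (exitWall (θm i) (θp i) (φ i)) (x i)

def firstExitSet (k : Fin n) : Set (Fin n → ℝ) :=
  {x ∈ box θm θp | ∀ j ∈ {i | θp i < φ i ∨ φ i < θm i}, j ≠ k →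
    exitTime θm θp γ φ k x < exitTime θm θp γ φ j x}

variable {θm θp γ φ} {i j k : Fin n} {x : Fin n → ℝ} {t : ℝ}

lemma isOpen_box : IsOpen (box θm θp) := by
  have : box θm θp = univ.pi fun i => Ioo (θm i) (θp i) := by ext; simp [box]
  exact this ▸ isOpen_set_pi finite_univ fun i _ => isOpen_Ioo

lemma exitTime_pos (hγ : 0 < γ i) (hi : θp i < φ i ∨ φ i < θm i) (hx : x ∈ box θm θp) :
    0 < exitTime θm θp γ φ i x :=
  switchTime_pos hγ (ratio_exitWall_mem_Ioo (hx i) hi).1 (ratio_exitWall_mem_Ioo (hx i) hi).2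

lemma continuousOn_exitTime (hi : θp i < φ i ∨ φ i < θm i) :
    ContinuousOn (exitTime θm θp γ φ i) (box θm θp) := fun _ hx =>
  ((continuousAt_switchTime (exitWall_ne hi) (ne_of_mem_Ioo_of_lt_or_lt (hx i) hi)).comp
    (f := fun x : Fin n → ℝ => x i) (continuous_apply i).continuousAt).continuousWithinAt

lemma isOpen_firstExitSet (hk : θp k < φ k ∨ φ k < θm k) :
    IsOpen (firstExitSet θm θp γ φ k) := by
  refine isOpen_iff_mem_nhds.2 fun x ⟨hx, hlt⟩ => ?_
  have hcont {j} (hj : θp j < φ j ∨ φ j < θm j) : ContinuousAt (exitTime θm θp γ φ j) x :=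
    (continuousOn_exitTime hj).continuousAt (isOpen_box.mem_nhds hx)
  filter_upwards [isOpen_box.mem_nhds hx, eventually_all.2 fun j =>
    eventually_imp_distrib_left.2 fun hj => eventually_imp_distrib_left.2 fun hjk =>
      (hcont hk).eventually_lt (hcont hj) (hlt j hj hjk)] with y hy hlt
  exact ⟨hy, hlt⟩

lemma firstExitSet_nonempty (hθ : ∀ i, θm i < θp i) (hγ : ∀ i, 0 < γ i)
    (hk : θp k < φ k ∨ φ k < θm k) : (firstExitSet θm θp γ φ k).Nonempty := by
  set x₀ : Fin n → ℝ := fun i => (θm i + θp i) / 2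
  have hx₀ : x₀ ∈ box θm θp := fun i =>
    ⟨by dsimp [x₀]; linarith [hθ i], by dsimp [x₀]; linarith [hθ i]⟩
  have : (𝓝[Ioo (θm k) (θp k)] exitWall (θm k) (θp k) (φ k)).NeBot :=
    mem_closure_iff_nhdsWithin_neBot.1 <|
    (closure_Ioo (hθ k).ne).symm ▸ exitWall_mem_Icc (φ := φ k) (hθ k).le
  have hτ : ∀ᶠ c in 𝓝 (exitWall (θm k) (θp k) (φ k)),
      ∀ j ∈ {i | θp i < φ i ∨ φ i < θm i}, j ≠ k →
        switchTime (γ k) (φ k) (exitWall (θm k) (θp k) (φ k)) c < exitTime θm θp γ φ j x₀ :=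
    eventually_all.2 fun j => eventually_imp_distrib_left.2 fun hj =>
      eventually_imp_distrib_left.2 fun _ =>
        (tendsto_switchTime_self (exitWall_ne hk)).eventually
          (gt_mem_nhds (exitTime_pos (hγ j) hj hx₀))
  obtain ⟨c, hc, hτc⟩ :=
    ((eventually_mem_nhdsWithin (s := Ioo (θm k) (θp k))).and (nhdsWithin_le_nhds hτ)).exists
  refine ⟨Function.update x₀ k c, fun i => ?_, fun j hj hjk => ?_⟩
  · rcases eq_or_ne i k with rfl | hik
    · simpa using hc
    · simpa [hik] using hx₀ i
  · simpa [exitTime, hjk] using hτc j hj hjk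

lemma flow_exitTime (hγ : γ k ≠ 0) (hk : θp k < φ k ∨ φ k < θm k) (hx : x ∈ box θm θp) :
    flow (γ k) (φ k) (x k) (exitTime θm θp γ φ k x) = exitWall (θm k) (θp k) (φ k) :=
  flow_switchTime_exitWall hγ (hx k) hk

lemma flow_mem_Ioo_of_mem_firstExitSet (hγ : 0 < γ j) (hx : x ∈ firstExitSet θm θp γ φ k)
    (ht₀ : 0 ≤ t) (ht : t ≤ exitTime θm θp γ φ k x) (hjk : j = k → t < exitTime θm θp γ φ k x) :
    flow (γ j) (φ j) (x j) t ∈ Ioo (θm j) (θp j) := by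
  refine flow_mem_Ioo_of_lt_switchTime hγ (hx.1 j) ht₀ fun hj => ?_
  rcases eq_or_ne j k with rfl | hne
  · exact hjk rfl
  · exact ht.trans_lt (hx.2 j hj hne)

lemma flow_mem_box_of_lt_exitTime (hγ : ∀ i, 0 < γ i) (hx : x ∈ firstExitSet θm θp γ φ k)
    (ht₀ : 0 ≤ t) (ht : t < exitTime θm θp γ φ k x) :
    (fun i => flow (γ i) (φ i) (x i) t) ∈ box θm θp := fun i =>
  flow_mem_Ioo_of_mem_firstExitSet (hγ i) hx ht₀ ht.le fun _ => ht

lemma flow_exitTime_mem_Ioo (hγ : ∀ i, 0 < γ i) (hk : θp k < φ k ∨ φ k < θm k)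
    (hx : x ∈ firstExitSet θm θp γ φ k) (hjk : j ≠ k) :
    flow (γ j) (φ j) (x j) (exitTime θm θp γ φ k x) ∈ Ioo (θm j) (θp j) :=
  flow_mem_Ioo_of_mem_firstExitSet (hγ j) hx (exitTime_pos (hγ k) hk hx.1).le le_rfl
    (absurd · hjk)

end Box

end PiecewiseAffine

open PiecewiseAffine

theorem stmt12_general (n : ℕ) (θm θp γ φ : Fin n → ℝ)
    (hθ : ∀ i, θm i < θp i) (hγ : ∀ i, 0 < γ i)
    (I : Set (Fin n)) (hI : I = {i | θp i < φ i ∨ φ i < θm i})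
    (τ : Fin n → (Fin n → ℝ) → ℝ)
    (hτ : ∀ i x, τ i x =
      if θp i < φ i then -(1 / γ i) * Real.log ((φ i - θp i) / (φ i - x i))
      else -(1 / γ i) * Real.log ((φ i - θm i) / (φ i - x i)))
    (Φ : (Fin n → ℝ) → ℝ → Fin n → ℝ)
    (hΦ : ∀ x t i, Φ x t i = φ i + Real.exp (-(γ i) * t) * (x i - φ i))
    (D : Set (Fin n → ℝ)) (hD : D = {y | ∀ i, y i ∈ Set.Ioo (θm i) (θp i)})
    (k : Fin n) :
    -- (a) upper wall unreachable when φ_k ≤ θ_k⁺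
    (φ k ≤ θp k → ∀ x ∈ D, ∀ t, 0 ≤ t → Φ x t k < θp k) ∧
    -- (a') lower wall unreachable when φ_k ≥ θ_k⁻
    (θm k ≤ φ k → ∀ x ∈ D, ∀ t, 0 ≤ t → θm k < Φ x t k) ∧
    -- (b) upper wall crossed on a nonempty open set of initial conditions
    (θp k < φ k →
      Set.Nonempty {x ∈ D | ∀ j ∈ I, j ≠ k → τ k x < τ j x} ∧
      IsOpen {x ∈ D | ∀ j ∈ I, j ≠ k → τ k x < τ j x} ∧
      0 < volume {x ∈ D | ∀ j ∈ I, j ≠ k → τ k x < τ j x} ∧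
      ∀ x ∈ {x ∈ D | ∀ j ∈ I, j ≠ k → τ k x < τ j x},
        Φ x (τ k x) k = θp k ∧
        (∀ t, 0 ≤ t → t < τ k x → Φ x t ∈ D) ∧
        (∀ j, j ≠ k → Φ x (τ k x) j ∈ Set.Ioo (θm j) (θp j))) ∧
    -- (b') lower wall crossed on a nonempty open set of initial conditions
    (φ k < θm k →
      Set.Nonempty {x ∈ D | ∀ j ∈ I, j ≠ k → τ k x < τ j x} ∧
      IsOpen {x ∈ D | ∀ j ∈ I, j ≠ k → τ k x < τ j x} ∧
      0 < volume {x ∈ D | ∀ j ∈ I, j ≠ k → τ k x < τ j x} ∧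
      ∀ x ∈ {x ∈ D | ∀ j ∈ I, j ≠ k → τ k x < τ j x},
        Φ x (τ k x) k = θm k ∧
        (∀ t, 0 ≤ t → t < τ k x → Φ x t ∈ D) ∧
        (∀ j, j ≠ k → Φ x (τ k x) j ∈ Set.Ioo (θm j) (θp j))) := by
  subst hI hD
  obtain rfl : τ = exitTime θm θp γ φ := by
    funext i x
    rw [hτ, exitTime, exitWall, switchTime]
    split_ifs <;> rfl
  obtain rfl : Φ = fun x t i => flow (γ i) (φ i) (x i) t := by
    funext x t i
    exact hΦ x t i
  have crossing (hk : θp k < φ k ∨ φ k < θm k) :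
      (firstExitSet θm θp γ φ k).Nonempty ∧ IsOpen (firstExitSet θm θp γ φ k) ∧
        0 < volume (firstExitSet θm θp γ φ k) :=
    ⟨firstExitSet_nonempty hθ hγ hk, isOpen_firstExitSet hk,
      (isOpen_firstExitSet hk).measure_pos volume (firstExitSet_nonempty hθ hγ hk)⟩
  refine ⟨fun hφ x hx t ht => flow_lt_of_le (hγ k).le (hx k).2 hφ ht,
    fun hφ x hx t ht => lt_flow_of_le (hγ k).le (hx k).1 hφ ht, fun hφ => ?_, fun hφ => ?_⟩
  · obtain ⟨hne, hopen, hvol⟩ := crossing (.inl hφ)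
    refine ⟨hne, hopen, hvol, fun x hx => ⟨?_, fun t => flow_mem_box_of_lt_exitTime hγ hx,
      fun j => flow_exitTime_mem_Ioo hγ (.inl hφ) hx⟩⟩
    simpa [exitWall, hφ] using flow_exitTime (hγ k).ne' (.inl hφ) hx.1
  · obtain ⟨hne, hopen, hvol⟩ := crossing (.inr hφ)
    refine ⟨hne, hopen, hvol, fun x hx => ⟨?_, fun t => flow_mem_box_of_lt_exitTime hγ hx,
      fun j => flow_exitTime_mem_Ioo hγ (.inr hφ) hx⟩⟩
    simpa [exitWall, (hφ.trans (hθ k)).not_gt] using flow_exitTime (hγ k).ne' (.inr hφ) hx.1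

/-- Characterization of transitions through a wall. (a) If `φ_k ≤ θ_k⁺`, no trajectory
starting in the box `D` ever exits through the upper wall in direction `k`. (b) If
`φ_k > θ_k⁺`, the set of points of `D` whose switching time in direction `k` is
strictly minimal is a nonempty open subset of `D` (hence of positive Lebesgue
measure), and every trajectory starting there exits `D` through the wall
`x_k = θ_k⁺`. (The analogous statement for the lower wall is included.) -/
theorem stmt12 (n : ℕ) (hn : 1 ≤ n) (θm θp γ φ : Fin n → ℝ)
    (hθ : ∀ i, θm i < θp i) (hγ : ∀ i, 0 < γ i)
    (I : Set (Fin n)) (hI : I = {i | θp i < φ i ∨ φ i < θm i})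
    (τ : Fin n → (Fin n → ℝ) → ℝ)
    (hτ : ∀ i x, τ i x =
      if θp i < φ i then -(1 / γ i) * Real.log ((φ i - θp i) / (φ i - x i))
      else -(1 / γ i) * Real.log ((φ i - θm i) / (φ i - x i)))
    (Φ : (Fin n → ℝ) → ℝ → Fin n → ℝ)
    (hΦ : ∀ x t i, Φ x t i = φ i + Real.exp (-(γ i) * t) * (x i - φ i))
    (D : Set (Fin n → ℝ)) (hD : D = {y | ∀ i, y i ∈ Set.Ioo (θm i) (θp i)})
    (k : Fin n) :
    -- (a) upper wall unreachable when φ_k ≤ θ_k⁺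
    (φ k ≤ θp k → ∀ x ∈ D, ∀ t, 0 ≤ t → Φ x t k < θp k) ∧
    -- (a') lower wall unreachable when φ_k ≥ θ_k⁻
    (θm k ≤ φ k → ∀ x ∈ D, ∀ t, 0 ≤ t → θm k < Φ x t k) ∧
    -- (b) upper wall crossed on a nonempty open set of initial conditions
    (θp k < φ k →
      Set.Nonempty {x ∈ D | ∀ j ∈ I, j ≠ k → τ k x < τ j x} ∧
      IsOpen {x ∈ D | ∀ j ∈ I, j ≠ k → τ k x < τ j x} ∧
      0 < volume {x ∈ D | ∀ j ∈ I, j ≠ k → τ k x < τ j x} ∧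
      ∀ x ∈ {x ∈ D | ∀ j ∈ I, j ≠ k → τ k x < τ j x},
        Φ x (τ k x) k = θp k ∧
        (∀ t, 0 ≤ t → t < τ k x → Φ x t ∈ D) ∧
        (∀ j, j ≠ k → Φ x (τ k x) j ∈ Set.Ioo (θm j) (θp j))) ∧
    -- (b') lower wall crossed on a nonempty open set of initial conditions
    (φ k < θm k →
      Set.Nonempty {x ∈ D | ∀ j ∈ I, j ≠ k → τ k x < τ j x} ∧
      IsOpen {x ∈ D | ∀ j ∈ I, j ≠ k → τ k x < τ j x} ∧
      0 < volume {x ∈ D | ∀ j ∈ I, j ≠ k → τ k x < τ j x} ∧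
      ∀ x ∈ {x ∈ D | ∀ j ∈ I, j ≠ k → τ k x < τ j x},
        Φ x (τ k x) k = θm k ∧
        (∀ t, 0 ≤ t → t < τ k x → Φ x t ∈ D) ∧
        (∀ j, j ≠ k → Φ x (τ k x) j ∈ Set.Ioo (θm j) (θp j))) :=
  stmt12_general n θm θp γ φ hθ hγ I hI τ hτ Φ hΦ D hD k
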